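/- Let X be a streak and a, b ∈ X. The following are equivalent: (1) a = b; (2) for all q ∈ ℚ, q < a ⟺ q < b; (3) for all q ∈ ℚ, a < q ⟺ b < q; (4) for all q ∈ ℚ, q < a implies q < b and a < q implies b < q. -/

import Mathlib

/-- A prestreak: a strict order (asymmetric and cotransitive) together with a
commutative additive monoid structure and a commutative multiplicative monoid
structure on the positive part, compatible with the order.  (The intrinsic
topology conditions of the paper are omitted, being vacuous in the classical
set-theoretic setting.) -/
structure Prestreak (X : Type*) where
  lt : X → X → Prop
  add : X → X → X
  zero : X
  mul : X → X → X
  one : X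
  lt_asymm : ∀ a b, ¬ (lt a b ∧ lt b a)
  lt_cotrans : ∀ a b x, lt a b → lt a x ∨ lt x b
  add_comm : ∀ a b, add a b = add b a
  add_assoc : ∀ a b c, add (add a b) c = add a (add b c)
  add_zero : ∀ a, add a zero = a
  zero_lt_one : lt zero one
  mul_pos : ∀ a b, lt zero a → lt zero b → lt zero (mul a b)
  mul_comm : ∀ a b, lt zero a → lt zero b → mul a b = mul b a
  mul_assoc : ∀ a b c, lt zero a → lt zero b → lt zero c →
    mul (mul a b) c = mul a (mul b c)
  mul_one : ∀ a, lt zero a → mul a one = a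
  mul_add : ∀ a b c, lt zero a → lt zero b → lt zero c →
    mul (add a b) c = add (mul a c) (mul b c)
  add_lt_add_iff : ∀ a b x, (lt (add a x) (add b x) ↔ lt a b)
  mul_lt_mul_iff : ∀ a b x, lt zero a → lt zero b → lt zero x →
    (lt (mul a x) (mul b x) ↔ lt a b)

namespace Prestreak

variable {X : Type*}

/-- Multiplication by a natural number: `0·a = 0`, `(n+1)·a = n·a + a`. -/
def nsmul (P : Prestreak X) : ℕ → X → X
  | 0, _ => P.zero
  | n + 1, a => P.add (nsmul P n a) a

/-- The canonical image of a natural number, `n ↦ n·1`. -/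
def ofNat (P : Prestreak X) (n : ℕ) : X := P.nsmul n P.one

/-- Comparison `x < q` of an element of a prestreak with a rational number,
using the canonical representation `q = (q.num⁺ − q.num⁻)/q.den`:
`x < (a−b)/c  :=  c·x + b < a`. -/
def ltQ (P : Prestreak X) (x : X) (q : ℚ) : Prop :=
  P.lt (P.add (P.nsmul q.den x) (P.ofNat ((-q.num).toNat))) (P.ofNat q.num.toNat)

/-- Comparison `q < x` of a rational with an element of a prestreak:
`(a−b)/c < x  :=  a < c·x + b`. -/
def qLt (P : Prestreak X) (q : ℚ) (x : X) : Prop :=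
  P.lt (P.ofNat q.num.toNat) (P.add (P.nsmul q.den x) (P.ofNat ((-q.num).toNat)))

/-- The archimedean property for prestreaks. -/
def Archimedean (P : Prestreak X) : Prop :=
  ∀ a b c d : X, P.lt b d →
    ∃ n : ℕ, P.lt (P.add a (P.nsmul n b)) (P.add c (P.nsmul n d))

/-- Tightness: antisymmetry of `≤` (where `a ≤ b := ¬ b < a`).
A streak is a tight archimedean prestreak. -/
def Tight (P : Prestreak X) : Prop :=
  ∀ a b : X, ¬ P.lt a b → ¬ P.lt b a → a = b

/-- The apartness relation `a # b := a < b ∨ b < a`. -/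
def Apart (P : Prestreak X) (a b : X) : Prop := P.lt a b ∨ P.lt b a

/-- A morphism of prestreaks: preserves `<`, `+`, `0`, `1` and products of
positive elements. -/
def IsHom {Y : Type*} (P : Prestreak X) (Q : Prestreak Y) (f : X → Y) : Prop :=
  (∀ a b, P.lt a b → Q.lt (f a) (f b)) ∧
  (∀ a b, f (P.add a b) = Q.add (f a) (f b)) ∧
  f P.zero = Q.zero ∧ f P.one = Q.one ∧
  (∀ a b, P.lt P.zero a → P.lt P.zero b → f (P.mul a b) = Q.mul (f a) (f b))

/-- A multiplicative structure on a prestreak: a total multiplication which is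
commutative, associative, distributes over addition, has unit `1`, restricts to
the given multiplication on positive elements, and satisfies the multiplicity
condition. -/
def IsMultiplicative (P : Prestreak X) (tmul : X → X → X) : Prop :=
  (∀ a b, tmul a b = tmul b a) ∧
  (∀ a b c, tmul (tmul a b) c = tmul a (tmul b c)) ∧
  (∀ a b c, tmul (P.add a b) c = P.add (tmul a c) (tmul b c)) ∧
  (∀ a, tmul a P.one = a) ∧
  (∀ a b, P.lt P.zero a → P.lt P.zero b → tmul a b = P.mul a b) ∧
  (∀ a b c d, P.lt b a → P.lt d c →
    P.lt (P.add (tmul a d) (tmul b c)) (P.add (tmul a c) (tmul b d)))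

end Prestreak

/-!
Rationals are dense in an archimedean prestreak: if `a < b`, pick `n` with `1 + n·a < n·b`, shift
`n·a` by a natural `l` to make it positive, and let `m + 1` be the least natural above `n·a + l`.
Then `m + 1 ≤ n·a + l + 1 < n·b + l`, so `(m + 1 - l)/n` lies strictly between `a` and `b`. Hence
if `a < b` or `b < a`, some rational bound of one element fails for the other, and tightness gives
`a = b`. Comparisons with a rational are defined through its reduced form; they agree with those
for any other representation because `<` is invariant under translation and under multiplication
by a positive natural.
-/

theorem Rat.num_toNat_mul_add_eq {q : ℚ} {a b c : ℕ} (hc : c ≠ 0)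
    (hq : q = ((a : ℚ) - b) / c) :
    q.num.toNat * c + b * q.den = a * q.den + (-q.num).toNat * c := by
  have hnum : (q.num : ℚ) * c = ((a : ℚ) - b) * q.den := by
    rw [← Rat.mul_den_eq_num, hq]
    field_simp
  have hnum' : q.num * c = ((a : ℤ) - b) * q.den := by exact_mod_cast hnum
  have hsplit := Int.toNat_sub_toNat_neg q.num
  zify
  linear_combination hnum' + c * hsplit

namespace Prestreak

variable {X : Type*} (P : Prestreak X)

-- Not an instance: it is installed with `letI` to borrow identities of commutative monoids.
abbrev toAddCommMonoid : AddCommMonoid X where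
  add := P.add
  add_assoc := P.add_assoc
  zero := P.zero
  zero_add a := (P.add_comm _ _).trans (P.add_zero a)
  add_zero := P.add_zero
  add_comm := P.add_comm
  nsmul := P.nsmul
  nsmul_zero _ := rfl
  nsmul_succ _ _ := rfl

theorem zero_add (a : X) : P.add P.zero a = a :=
  letI := P.toAddCommMonoid; _root_.zero_add a

theorem nsmul_zero (n : ℕ) : P.nsmul n P.zero = P.zero :=
  letI := P.toAddCommMonoid; _root_.nsmul_zero n

theorem nsmul_add (n : ℕ) (a b : X) :
    P.nsmul n (P.add a b) = P.add (P.nsmul n a) (P.nsmul n b) :=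
  letI := P.toAddCommMonoid; _root_.nsmul_add a b n

theorem add_nsmul (m n : ℕ) (a : X) :
    P.nsmul (m + n) a = P.add (P.nsmul m a) (P.nsmul n a) :=
  letI := P.toAddCommMonoid; _root_.add_nsmul a m n

theorem mul_nsmul (m n : ℕ) (a : X) : P.nsmul (m * n) a = P.nsmul m (P.nsmul n a) :=
  letI := P.toAddCommMonoid; mul_nsmul' a m n

theorem ofNat_add (m n : ℕ) : P.ofNat (m + n) = P.add (P.ofNat m) (P.ofNat n) :=
  P.add_nsmul m n P.one

theorem ofNat_mul (m n : ℕ) : P.ofNat (m * n) = P.nsmul m (P.ofNat n) :=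
  P.mul_nsmul m n P.one

theorem lt_irrefl (a : X) : ¬ P.lt a a := fun h => P.lt_asymm a a ⟨h, h⟩

theorem lt_trans {a b c : X} (hab : P.lt a b) (hbc : P.lt b c) : P.lt a c :=
  (P.lt_cotrans a b c hab).resolve_right fun hcb => P.lt_asymm b c ⟨hbc, hcb⟩

theorem lt_of_le_of_lt {a b c : X} (hab : ¬ P.lt b a) (hbc : P.lt b c) : P.lt a c :=
  (P.lt_cotrans b c a hbc).resolve_left hab

theorem add_lt_add_iff_left (a b x : X) : P.lt (P.add x a) (P.add x b) ↔ P.lt a b := by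
  rw [P.add_comm x a, P.add_comm x b]
  exact P.add_lt_add_iff a b x

theorem add_lt_add {a b c d : X} (hab : P.lt a b) (hcd : P.lt c d) :
    P.lt (P.add a c) (P.add b d) :=
  P.lt_trans ((P.add_lt_add_iff a b c).2 hab) ((P.add_lt_add_iff_left c d b).2 hcd)

theorem lt_of_nsmul_lt_nsmul {a b : X} {n : ℕ} (h : P.lt (P.nsmul n a) (P.nsmul n b)) :
    P.lt a b := by
  induction n with
  | zero => exact absurd h (P.lt_irrefl _)
  | succ n ih =>
    rcases P.lt_cotrans _ _ (P.add (P.nsmul n a) b) h with h | h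
    · exact (P.add_lt_add_iff_left a b _).1 h
    · exact ih ((P.add_lt_add_iff _ _ b).1 h)

theorem nsmul_lt_nsmul {a b : X} (hab : P.lt a b) {n : ℕ} (hn : n ≠ 0) :
    P.lt (P.nsmul n a) (P.nsmul n b) := by
  induction n with
  | zero => exact absurd rfl hn
  | succ n ih =>
    rcases eq_or_ne n 0 with rfl | hn
    · rwa [show P.nsmul 1 a = a from P.zero_add a, show P.nsmul 1 b = b from P.zero_add b]
    · exact P.add_lt_add (ih hn) hab

theorem nsmul_lt_nsmul_iff {n : ℕ} (hn : n ≠ 0) (a b : X) :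
    P.lt (P.nsmul n a) (P.nsmul n b) ↔ P.lt a b :=
  ⟨P.lt_of_nsmul_lt_nsmul, fun h => P.nsmul_lt_nsmul h hn⟩

section Fractions

variable {R : X → X → Prop} (hadd : ∀ u v w, R (P.add u w) (P.add v w) ↔ R u v)
  (hnsmul : ∀ {n : ℕ} (u v : X), n ≠ 0 → (R (P.nsmul n u) (P.nsmul n v) ↔ R u v))
include hadd hnsmul

theorem rel_frac_iff_mul_add (x : X) (a b c : ℕ) {k : ℕ} (hk : k ≠ 0) (j : ℕ) :
    R (P.add (P.nsmul c x) (P.ofNat b)) (P.ofNat a) ↔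
      R (P.add (P.nsmul (k * c) x) (P.ofNat (k * b + j))) (P.ofNat (k * a + j)) := by
  rw [← hnsmul _ _ hk, ← hadd _ _ (P.ofNat j), P.nsmul_add, ← P.mul_nsmul, ← P.ofNat_mul,
    ← P.ofNat_mul, P.add_assoc, ← P.ofNat_add, ← P.ofNat_add]

-- With `R` either `<` or `>`: comparing `c·x + b` with `a` depends only on the rational
-- `(a - b)/c`.
theorem rel_frac_congr (x : X) {a b c a' b' c' : ℕ} (hc : c ≠ 0) (hc' : c' ≠ 0)
    (h : a * c' + b' * c = a' * c + b * c') :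
    R (P.add (P.nsmul c x) (P.ofNat b)) (P.ofNat a) ↔
      R (P.add (P.nsmul c' x) (P.ofNat b')) (P.ofNat a') := by
  rw [P.rel_frac_iff_mul_add hadd hnsmul x a b c hc' (c * b'),
    P.rel_frac_iff_mul_add hadd hnsmul x a' b' c' hc (c' * b), Nat.mul_comm c' c,
    Nat.add_comm (c' * b), show c' * a + c * b' = c * a' + c' * b by linarith]

end Fractions

theorem ltQ_iff_of_eq_div {q : ℚ} {a b c : ℕ} (hc : c ≠ 0) (hq : q = ((a : ℚ) - b) / c)
    (x : X) : P.ltQ x q ↔ P.lt (P.add (P.nsmul c x) (P.ofNat b)) (P.ofNat a) :=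
  P.rel_frac_congr P.add_lt_add_iff (fun _ _ hn => P.nsmul_lt_nsmul_iff hn _ _) x
    q.den_ne_zero hc (Rat.num_toNat_mul_add_eq hc hq)

theorem qLt_iff_of_eq_div {q : ℚ} {a b c : ℕ} (hc : c ≠ 0) (hq : q = ((a : ℚ) - b) / c)
    (x : X) : P.qLt q x ↔ P.lt (P.ofNat a) (P.add (P.nsmul c x) (P.ofNat b)) :=
  P.rel_frac_congr (R := fun u v => P.lt v u) (fun u v w => P.add_lt_add_iff v u w)
    (fun _ _ hn => P.nsmul_lt_nsmul_iff hn _ _) x q.den_ne_zero hc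
    (Rat.num_toNat_mul_add_eq hc hq)

section Archimedean

variable {P} (hA : P.Archimedean)
include hA

theorem exists_lt_ofNat (x : X) : ∃ n, P.lt x (P.ofNat n) := by
  obtain ⟨n, hn⟩ := hA x P.zero P.zero P.one P.zero_lt_one
  rw [P.nsmul_zero, P.add_zero, P.zero_add] at hn
  exact ⟨n, hn⟩

theorem exists_zero_lt_add_ofNat (x : X) : ∃ n, P.lt P.zero (P.add x (P.ofNat n)) := by
  obtain ⟨n, hn⟩ := hA P.zero P.zero x P.one P.zero_lt_one
  rw [P.nsmul_zero, P.add_zero] at hn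
  exact ⟨n, hn⟩

theorem exists_floor {y : X} (hy : P.lt P.zero y) :
    ∃ m : ℕ, ¬ P.lt y (P.ofNat m) ∧ P.lt y (P.ofNat (m + 1)) := by
  classical
  have hex := exists_lt_ofNat hA y
  have hspec := Nat.find_spec hex
  have hpos : Nat.find hex ≠ 0 := by
    intro h0
    rw [h0] at hspec
    exact P.lt_asymm _ _ ⟨hy, hspec⟩
  obtain ⟨m, hm⟩ := Nat.exists_eq_add_one_of_ne_zero hpos
  rw [hm] at hspec
  exact ⟨m, Nat.find_min hex (by omega), hspec⟩

theorem exists_frac_btwn {a b : X} (hab : P.lt a b) :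
    ∃ m l n : ℕ, n ≠ 0 ∧ P.lt (P.add (P.nsmul n a) (P.ofNat l)) (P.ofNat m) ∧
      P.lt (P.ofNat m) (P.add (P.nsmul n b) (P.ofNat l)) := by
  obtain ⟨n, hn⟩ := hA P.one a P.zero b hab
  rw [P.zero_add] at hn
  have hn0 : n ≠ 0 := by
    rintro rfl
    have h10 : P.lt (P.add P.one P.zero) P.zero := hn
    rw [P.add_zero] at h10
    exact P.lt_asymm _ _ ⟨P.zero_lt_one, h10⟩
  obtain ⟨l, hl⟩ := exists_zero_lt_add_ofNat hA (P.nsmul n a)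
  obtain ⟨m, hm_le, hm_lt⟩ := exists_floor hA hl
  refine ⟨m + 1, l, n, hn0, hm_lt,
    P.lt_of_le_of_lt (b := P.add (P.add (P.nsmul n a) (P.ofNat l)) P.one)
      (fun h => hm_le ((P.add_lt_add_iff _ _ P.one).1 h)) ?_⟩
  rw [P.add_assoc, P.add_comm (P.ofNat l), ← P.add_assoc, P.add_comm _ P.one]
  exact (P.add_lt_add_iff _ _ _).2 hn

theorem exists_ltQ_qLt {a b : X} (hab : P.lt a b) : ∃ q : ℚ, P.ltQ a q ∧ P.qLt q b := by
  obtain ⟨m, l, n, hn, ha, hb⟩ := exists_frac_btwn hA hab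
  exact ⟨((m : ℚ) - l) / n, (P.ltQ_iff_of_eq_div hn rfl a).2 ha,
    (P.qLt_iff_of_eq_div hn rfl b).2 hb⟩

theorem not_lt_of_forall_qLt_imp {a b : X} (h : ∀ q, P.qLt q a → P.qLt q b) : ¬ P.lt b a :=
  fun hba =>
    let ⟨q, hbq, hqa⟩ := exists_ltQ_qLt hA hba
    P.lt_asymm _ _ ⟨hbq, h q hqa⟩

theorem not_lt_of_forall_ltQ_imp {a b : X} (h : ∀ q, P.ltQ b q → P.ltQ a q) : ¬ P.lt b a :=
  fun hba =>
    let ⟨q, hbq, hqa⟩ := exists_ltQ_qLt hA hba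
    P.lt_asymm _ _ ⟨h q hbq, hqa⟩

end Archimedean

end Prestreak

/-- In a streak, an element is determined by its rational lower bounds, or by
its rational upper bounds. -/
theorem element_determined_by_rational_bounds {X : Type*} (P : Prestreak X)
    (hA : P.Archimedean) (hT : P.Tight) (a b : X) :
    List.TFAE [a = b,
      ∀ q : ℚ, P.qLt q a ↔ P.qLt q b,
      ∀ q : ℚ, P.ltQ a q ↔ P.ltQ b q,
      ∀ q : ℚ, (P.qLt q a → P.qLt q b) ∧ (P.ltQ a q → P.ltQ b q)] := by
  tfae_have 1 → 2 := by rintro rfl q; exact Iff.rfl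
  tfae_have 1 → 3 := by rintro rfl q; exact Iff.rfl
  tfae_have 1 → 4 := by rintro rfl q; exact ⟨id, id⟩
  tfae_have 2 → 1 := fun h => hT a b (P.not_lt_of_forall_qLt_imp hA fun q => (h q).2)
    (P.not_lt_of_forall_qLt_imp hA fun q => (h q).1)
  tfae_have 3 → 1 := fun h => hT a b (P.not_lt_of_forall_ltQ_imp hA fun q => (h q).1)
    (P.not_lt_of_forall_ltQ_imp hA fun q => (h q).2)
  tfae_have 4 → 1 := fun h => hT a b (P.not_lt_of_forall_ltQ_imp hA fun q => (h q).2)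
    (P.not_lt_of_forall_qLt_imp hA fun q => (h q).1)
  tfae_finish
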